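/- arXiv:2312.12440 — 2 statements merged into one kernel-verified Lean document; each statement's English description precedes it below -/
import Mathlib

section
/- Let f : [0,1] → ℝ be a bounded nonnegative Riemann integrable function with α = ∫₀¹ f > 0, and let ‖f‖ = sup_{x∈[0,1]} |f(x)|. Then the set E = {x ∈ [0,1] : f(x) ≥ α/3} contains a finite union of non-overlapping closed intervals of total length at least α/(3‖f‖). -/
open MeasureTheory

/-- A bounded function `f` is Riemann integrable on `[a, b]` iff it is bounded there and
satisfies the Riemann (Darboux) criterion: for every `ε > 0` there is a partition
`a = p 0 ≤ p 1 ≤ ⋯ ≤ p n = b` whose upper and lower Darboux sums differ by less than `ε`.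
For such `f` the Riemann integral coincides with the Lebesgue integral. -/
def RiemannIntegrableOn (f : ℝ → ℝ) (a b : ℝ) : Prop :=
  (∃ C : ℝ, ∀ x ∈ Set.Icc a b, |f x| ≤ C) ∧
  ∀ ε > (0 : ℝ), ∃ (n : ℕ) (p : Fin (n + 1) → ℝ),
    Monotone p ∧ p 0 = a ∧ p (Fin.last n) = b ∧
    ∑ i : Fin n,
      (sSup (f '' Set.Icc (p i.castSucc) (p i.succ)) -
        sInf (f '' Set.Icc (p i.castSucc) (p i.succ))) * (p i.succ - p i.castSucc) < ε

/-- Let `f : [0,1] → ℝ` be a bounded nonnegative Riemann integrable function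
with `α = ∫₀¹ f > 0` (the Riemann integral coinciding with the Lebesgue integral), and let
`‖f‖ = sup_{x ∈ [0,1]} |f x|`. Then `E = {x ∈ [0,1] : f x ≥ α/3}` contains a finite union of
non-overlapping closed intervals (closed intervals with pairwise disjoint interiors) of total
length at least `α / (3‖f‖)`. -/
theorem subset_of_closed_intervals_in_superlevel_set
    (f : ℝ → ℝ)
    (hf : RiemannIntegrableOn f 0 1)
    (hf0 : ∀ x ∈ Set.Icc (0 : ℝ) 1, 0 ≤ f x)
    (α : ℝ) (hα : α = ∫ x in (0 : ℝ)..1, f x) (hαpos : 0 < α)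
    (M : ℝ) (hM : M = sSup ((fun x => |f x|) '' Set.Icc (0 : ℝ) 1)) :
    ∃ (m : ℕ) (a b : Fin m → ℝ),
      (∀ i, a i ≤ b i) ∧
      (∀ i j, i ≠ j → Disjoint (Set.Ioo (a i) (b i)) (Set.Ioo (a j) (b j))) ∧
      (∀ i, Set.Icc (a i) (b i) ⊆ {x ∈ Set.Icc (0 : ℝ) 1 | α / 3 ≤ f x}) ∧
      α / (3 * M) ≤ ∑ i, (b i - a i) := by
  classical
  obtain ⟨⟨C, hC⟩, hcrit⟩ := hf
  obtain ⟨n, p, hmono, hp0, hpn, hsum⟩ := hcrit (α/3) (by positivity)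
  -- M is an upper bound for |f| on [0,1]
  have hMub : ∀ x ∈ Set.Icc (0:ℝ) 1, |f x| ≤ M := by
    intro x hx
    rw [hM]
    exact le_csSup ⟨C, fun y ⟨z, hz, hzy⟩ => hzy ▸ hC z hz⟩ ⟨x, hx, rfl⟩
  have hle : ∀ i : Fin n, p i.castSucc ≤ p i.succ :=
    fun i => hmono (Fin.castSucc_lt_succ : i.castSucc < i.succ).le
  have hsub : ∀ i : Fin n, Set.Icc (p i.castSucc) (p i.succ) ⊆ Set.Icc (0:ℝ) 1 := by
    intro i x hx
    constructor
    · calc (0:ℝ) = p 0 := hp0.symm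
        _ ≤ p i.castSucc := hmono (Fin.zero_le _)
        _ ≤ x := hx.1
    · calc x ≤ p i.succ := hx.2
        _ ≤ p (Fin.last n) := hmono (Fin.le_last _)
        _ = 1 := hpn
  have hne : ∀ i : Fin n, (f '' Set.Icc (p i.castSucc) (p i.succ)).Nonempty :=
    fun i => ⟨f (p i.castSucc), ⟨p i.castSucc, ⟨le_rfl, hle i⟩, rfl⟩⟩
  have hbdd : ∀ i : Fin n, BddAbove (f '' Set.Icc (p i.castSucc) (p i.succ)) := by
    intro i
    exact ⟨M, fun y ⟨x, hx, hxy⟩ => hxy ▸ (le_abs_self _).trans (hMub x (hsub i hx))⟩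
  have hbddb : ∀ i : Fin n, BddBelow (f '' Set.Icc (p i.castSucc) (p i.succ)) := by
    intro i
    exact ⟨0, fun y ⟨x, hx, hxy⟩ => hxy ▸ hf0 x (hsub i hx)⟩
  set S : Fin n → ℝ := fun i => sSup (f '' Set.Icc (p i.castSucc) (p i.succ)) with hS
  set I : Fin n → ℝ := fun i => sInf (f '' Set.Icc (p i.castSucc) (p i.succ)) with hI
  set Δ : Fin n → ℝ := fun i => p i.succ - p i.castSucc with hΔdef
  have hΔ0 : ∀ i, 0 ≤ Δ i := fun i => sub_nonneg.2 (hle i)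
  -- f is interval integrable
  have hint : IntervalIntegrable f volume 0 1 := by
    by_contra h
    rw [intervalIntegral.integral_undef h] at hα
    linarith
  have hinti : ∀ i : Fin n, IntervalIntegrable f volume (p i.castSucc) (p i.succ) := by
    intro i
    refine hint.mono_set ?_
    rw [Set.uIcc_of_le (hle i), Set.uIcc_of_le zero_le_one]
    exact hsub i
  -- the ℕ-indexed partition
  set q : ℕ → ℝ := fun k => p ⟨min k n, Nat.lt_succ_of_le (min_le_right _ _)⟩ with hq
  have hqc : ∀ i : Fin n, q i = p i.castSucc := by
    intro i
    apply congrArg p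
    ext
    simp [Nat.min_eq_left i.isLt.le]
  have hqs : ∀ i : Fin n, q (i + 1) = p i.succ := by
    intro i
    apply congrArg p
    ext
    simp [Nat.min_eq_left (Nat.succ_le_of_lt i.isLt)]
  have hq0 : q 0 = 0 := by
    rw [hq]; simpa using hp0
  have hqn : q n = 1 := by
    rw [hq]
    simpa [Fin.last] using hpn
  have hα' : α = ∑ i : Fin n, ∫ x in (p i.castSucc)..(p i.succ), f x := by
    rw [hα, ← hq0, ← hqn,
      ← intervalIntegral.sum_integral_adjacent_intervals (a := q) (n := n)
        (fun k hk => by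
          have := hinti ⟨k, hk⟩
          rwa [← hqc ⟨k, hk⟩, ← hqs ⟨k, hk⟩] at this),
      ← Fin.sum_univ_eq_sum_range (fun k => ∫ x in q k..q (k+1), f x) n]
    exact Finset.sum_congr rfl fun i _ => by rw [hqc i, hqs i]
  -- upper sum bound
  have hαU : α ≤ ∑ i, S i * Δ i := by
    rw [hα']
    refine Finset.sum_le_sum fun i _ => ?_
    have hmon := intervalIntegral.integral_mono_on (hle i) (hinti i)
      (intervalIntegrable_const (c := S i))
      (fun x hx => le_csSup (hbdd i) ⟨x, hx, rfl⟩)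
    rw [intervalIntegral.integral_const, smul_eq_mul] at hmon
    calc (∫ x in (p i.castSucc)..(p i.succ), f x) ≤ (p i.succ - p i.castSucc) * S i := hmon
      _ = S i * Δ i := by rw [hΔdef]; ring
  -- lower sum bound
  have hUL : ∑ i, S i * Δ i - ∑ i, I i * Δ i < α / 3 := by
    have : ∑ i, S i * Δ i - ∑ i, I i * Δ i = ∑ i : Fin n, (S i - I i) * Δ i := by
      rw [← Finset.sum_sub_distrib]
      exact Finset.sum_congr rfl fun i _ => by ring
    rw [this]
    exact hsum
  have hL : 2 * α / 3 < ∑ i, I i * Δ i := by linarith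
  -- telescoping
  have htel : ∑ i : Fin n, Δ i = 1 := by
    have : ∑ i : Fin n, Δ i = ∑ k ∈ Finset.range n, (q (k+1) - q k) := by
      rw [← Fin.sum_univ_eq_sum_range (fun k => q (k+1) - q k) n]
      exact Finset.sum_congr rfl fun i _ => by rw [hqc i, hqs i]
    rw [this, Finset.sum_range_sub, hq0, hqn, sub_zero]
  set A : Finset (Fin n) := Finset.univ.filter (fun i => α / 3 ≤ I i) with hA
  set ℓ : ℝ := ∑ i ∈ A, Δ i with hℓ
  have hℓ0 : 0 ≤ ℓ := Finset.sum_nonneg fun i _ => hΔ0 i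
  have hIM : ∀ i, I i ≤ M := by
    intro i
    calc I i ≤ f (p i.castSucc) := csInf_le (hbddb i) ⟨p i.castSucc, ⟨le_rfl, hle i⟩, rfl⟩
      _ ≤ |f (p i.castSucc)| := le_abs_self _
      _ ≤ M := hMub _ (hsub i ⟨le_rfl, hle i⟩)
  have hL1 : ∑ i, I i * Δ i ≤ M * ℓ + α / 3 := by
    rw [← Finset.sum_filter_add_sum_filter_not Finset.univ (fun i => α / 3 ≤ I i)
      (fun i => I i * Δ i)]
    have h1 : ∑ i ∈ A, I i * Δ i ≤ M * ℓ := by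
      rw [hℓ, Finset.mul_sum]
      exact Finset.sum_le_sum fun i _ => mul_le_mul_of_nonneg_right (hIM i) (hΔ0 i)
    have h2 : ∑ i ∈ Finset.univ.filter (fun i => ¬ (α / 3 ≤ I i)), I i * Δ i ≤ α / 3 := by
      calc ∑ i ∈ Finset.univ.filter (fun i => ¬ (α / 3 ≤ I i)), I i * Δ i
          ≤ ∑ i ∈ Finset.univ.filter (fun i => ¬ (α / 3 ≤ I i)), (α/3) * Δ i := by
            refine Finset.sum_le_sum fun i hi => ?_
            have := (Finset.mem_filter.1 hi).2
            exact mul_le_mul_of_nonneg_right (le_of_not_ge this) (hΔ0 i)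
        _ ≤ ∑ i : Fin n, (α/3) * Δ i := by
            refine Finset.sum_le_sum_of_subset_of_nonneg (Finset.filter_subset _ _)
              fun i _ _ => ?_
            exact mul_nonneg (by positivity) (hΔ0 i)
        _ = α / 3 := by rw [← Finset.mul_sum, htel, mul_one]
    linarith
  have hMl : α / 3 < M * ℓ := by linarith
  have hM0 : 0 < M := by
    by_contra h
    push_neg at h
    nlinarith [mul_nonpos_of_nonpos_of_nonneg h hℓ0]
  have hfinal : α / (3 * M) ≤ ℓ := by
    rw [div_le_iff₀ (by positivity)]
    nlinarith
  -- A is nonempty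
  have hAne : A.Nonempty := by
    rw [Finset.nonempty_iff_ne_empty]
    intro h
    rw [h, Finset.sum_empty] at hℓ
    have : (0:ℝ) < α / (3 * M) := by positivity
    linarith [hfinal, hℓ]
  obtain ⟨i₀, hi₀⟩ := hAne
  have hi₀' : α / 3 ≤ I i₀ := (Finset.mem_filter.1 hi₀).2
  set c : ℝ := p i₀.castSucc with hc
  have hcE : c ∈ Set.Icc (0:ℝ) 1 ∧ α / 3 ≤ f c := by
    constructor
    · exact hsub i₀ ⟨le_rfl, hle i₀⟩
    · exact hi₀'.trans (csInf_le (hbddb i₀) ⟨c, ⟨le_rfl, hle i₀⟩, rfl⟩)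
  refine ⟨n, fun i => if α / 3 ≤ I i then p i.castSucc else c,
    fun i => if α / 3 ≤ I i then p i.succ else c, ?_, ?_, ?_, ?_⟩
  · intro i
    by_cases h : α / 3 ≤ I i <;> simp [h, hle i]
  · intro i j hij
    by_cases hi : α / 3 ≤ I i
    · by_cases hj : α / 3 ≤ I j
      · simp only [hi, hj, if_pos]
        rcases hij.lt_or_gt with hlt | hlt
        · have hpl : p i.succ ≤ p j.castSucc := hmono (by
            rw [Fin.le_def]
            simpa using hlt)
          rw [Set.disjoint_left]
          intro x hx1 hx2
          have := hx1.2
          have := hx2.1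
          linarith
        · have hpl : p j.succ ≤ p i.castSucc := hmono (by
            rw [Fin.le_def]
            simpa using hlt)
          rw [Set.disjoint_left]
          intro x hx1 hx2
          have := hx1.1
          have := hx2.2
          linarith
      · simp [hj]
    · simp [hi]
  · intro i x hx
    by_cases h : α / 3 ≤ I i
    · simp only [h, if_pos] at hx
      exact ⟨hsub i hx, h.trans (csInf_le (hbddb i) ⟨x, hx, rfl⟩)⟩
    · simp only [h, if_neg, not_false_iff] at hx
      have hxc : x = c := le_antisymm hx.2 hx.1
      rw [hxc]
      exact ⟨hcE.1, hcE.2⟩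
  · have : ∑ i : Fin n, ((if α / 3 ≤ I i then p i.succ else c) -
        (if α / 3 ≤ I i then p i.castSucc else c)) = ℓ := by
      rw [hℓ, hA, Finset.sum_filter]
      exact Finset.sum_congr rfl fun i _ => by
        by_cases h : α / 3 ≤ I i <;> simp [h, hΔdef]
    rw [this]
    exact hfinal
end

section
/- Dominated Convergence Theorem for improper Riemann integrals: let (fₙ) be a sequence of functions on [a,∞) converging pointwise to f, such that each fₙ and f are Riemann integrable on [a,c] for every c > a, and suppose there is a function M : [a,∞) → ℝ, Riemann integrable on [a,c] for every c > a with convergent improper integral ∫ₐ^∞ M (i.e. lim_{c→∞} ∫ₐᶜ M exists), such that |fₙ(x)| ≤ M(x) for all n and all x ∈ [a,∞). Then the improper integrals ∫ₐ^∞ fₙ and ∫ₐ^∞ f converge (absolutely) and limₙ ∫ₐ^∞ fₙ = ∫ₐ^∞ f. -/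
open MeasureTheory Filter

open Set Topology ENNReal

lemma exists_mem_Ico_partition : ∀ (n : ℕ) (p : Fin (n + 1) → ℝ), Monotone p →
    ∀ x : ℝ, p 0 ≤ x → x < p (Fin.last n) →
    ∃ i : Fin n, x ∈ Set.Ico (p i.castSucc) (p i.succ) := by
  intro n
  induction n with
  | zero => intro p _ x h h'; exact absurd h (not_le.2 h')
  | succ n ih =>
    intro p hp x hx hx'
    by_cases h1 : x < p 1
    · exact ⟨0, ⟨hx, by simpa using h1⟩⟩
    · obtain ⟨i, hi⟩ := ih (p ∘ Fin.succ) (hp.comp Fin.strictMono_succ.monotone)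
        x (not_lt.1 h1) (by simpa [Fin.succ_last] using hx')
      exact ⟨i.succ, by rw [← Fin.succ_castSucc]; exact hi.1, hi.2⟩

lemma RiemannIntegrableOn.aestronglyMeasurable {f : ℝ → ℝ} {a b : ℝ}
    (h : RiemannIntegrableOn f a b) :
    AEStronglyMeasurable f (volume.restrict (Set.Ioc a b)) := by
  obtain ⟨C, hC⟩ := h.1
  have key : ∀ k : ℕ, ∃ n : ℕ, ∃ p : Fin (n+1) → ℝ, Monotone p ∧ p 0 = a ∧
      p (Fin.last n) = b ∧
      ∑ i : Fin n, (sSup (f '' Set.Icc (p i.castSucc) (p i.succ)) -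
        sInf (f '' Set.Icc (p i.castSucc) (p i.succ))) * (p i.succ - p i.castSucc)
        < (1/2 : ℝ)^k :=
    fun k => h.2 _ (by positivity)
  choose n p hmono h0 hlast hsum using key
  -- abbreviations
  set S : (k : ℕ) → Fin (n k) → ℝ :=
    fun k i => sSup (f '' Set.Icc (p k i.castSucc) (p k i.succ)) with hS
  set I : (k : ℕ) → Fin (n k) → ℝ :=
    fun k i => sInf (f '' Set.Icc (p k i.castSucc) (p k i.succ)) with hI
  set g : ℕ → ℝ → ℝ := fun k x => ∑ i : Fin (n k),
    Set.indicator (Set.Ico (p k i.castSucc) (p k i.succ)) (fun _ => I k i) x with hg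
  set D : ℕ → ℝ → ℝ := fun k x => ∑ i : Fin (n k),
    Set.indicator (Set.Ico (p k i.castSucc) (p k i.succ)) (fun _ => S k i - I k i) x with hD
  have hsub : ∀ k (i : Fin (n k)),
      Set.Icc (p k i.castSucc) (p k i.succ) ⊆ Set.Icc a b := by
    intro k i y hy
    exact ⟨((h0 k).symm.le.trans (hmono k (Fin.zero_le _))).trans hy.1,
      hy.2.trans ((hmono k (Fin.le_last _)).trans (hlast k).le)⟩
  have hne : ∀ k (i : Fin (n k)), (f '' Set.Icc (p k i.castSucc) (p k i.succ)).Nonempty :=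
    fun k i => (Set.nonempty_Icc.2 (hmono k (Fin.castSucc_le_succ i))).image f
  have hbddA : ∀ k (i : Fin (n k)), BddAbove (f '' Set.Icc (p k i.castSucc) (p k i.succ)) := by
    intro k i
    refine ⟨C, fun y hy => ?_⟩
    obtain ⟨x, hx, rfl⟩ := hy
    exact (abs_le.1 (hC x (hsub k i hx))).2
  have hbddB : ∀ k (i : Fin (n k)), BddBelow (f '' Set.Icc (p k i.castSucc) (p k i.succ)) := by
    intro k i
    refine ⟨-C, fun y hy => ?_⟩
    obtain ⟨x, hx, rfl⟩ := hy
    exact (abs_le.1 (hC x (hsub k i hx))).1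
  have hIle : ∀ k (i : Fin (n k)), ∀ x ∈ Set.Icc (p k i.castSucc) (p k i.succ),
      I k i ≤ f x ∧ f x ≤ S k i := fun k i x hx =>
    ⟨csInf_le (hbddB k i) ⟨x, hx, rfl⟩, le_csSup (hbddA k i) ⟨x, hx, rfl⟩⟩
  have hSI : ∀ k (i : Fin (n k)), 0 ≤ S k i - I k i := by
    intro k i
    obtain ⟨y, hy⟩ := Set.nonempty_Icc.2 (hmono k (Fin.castSucc_le_succ i))
    have := hIle k i y hy
    linarith [this.1, this.2]
  -- unique interval value
  have hval : ∀ k (x : ℝ), x ∈ Set.Ico a b → ∃ i : Fin (n k),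
      x ∈ Set.Ico (p k i.castSucc) (p k i.succ) ∧ g k x = I k i ∧ D k x = S k i - I k i := by
    intro k x hx
    obtain ⟨i, hi⟩ := exists_mem_Ico_partition (n k) (p k) (hmono k) x
      (by rw [h0 k]; exact hx.1) (by rw [hlast k]; exact hx.2)
    have huniq : ∀ j : Fin (n k), j ≠ i → x ∉ Set.Ico (p k j.castSucc) (p k j.succ) := by
      intro j hj hxj
      rcases lt_or_gt_of_ne hj with hlt | hgt
      · exact absurd (le_trans (hmono k (Fin.succ_le_castSucc_iff.2 hlt)) hi.1)
          (not_le.2 hxj.2)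
      · exact absurd (le_trans (hmono k (Fin.succ_le_castSucc_iff.2 hgt)) hxj.1)
          (not_le.2 hi.2)
    refine ⟨i, hi, ?_, ?_⟩
    · exact (Finset.sum_eq_single_of_mem i (Finset.mem_univ i)
        (fun j _ hj => Set.indicator_of_notMem (huniq j hj) _)).trans
        (Set.indicator_of_mem hi _)
    · exact (Finset.sum_eq_single_of_mem i (Finset.mem_univ i)
        (fun j _ hj => Set.indicator_of_notMem (huniq j hj) _)).trans
        (Set.indicator_of_mem hi _)
  have hDnonneg : ∀ k x, 0 ≤ D k x := fun k x =>
    Finset.sum_nonneg fun i _ => Set.indicator_nonneg (fun _ _ => hSI k i) x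
  have hDmeas : ∀ k, Measurable (D k) := fun k =>
    Finset.measurable_sum _ fun i _ => measurable_const.indicator measurableSet_Ico
  have hgmeas : ∀ k, Measurable (g k) := fun k =>
    Finset.measurable_sum _ fun i _ => measurable_const.indicator measurableSet_Ico
  -- lintegral bound
  have hlint : ∀ k, ∫⁻ x, ENNReal.ofReal (D k x) ≤ ENNReal.ofReal ((1/2 : ℝ)^k) := by
    intro k
    have heq : ∀ x, ENNReal.ofReal (D k x) = ∑ i : Fin (n k),
        Set.indicator (Set.Ico (p k i.castSucc) (p k i.succ))
          (fun _ => ENNReal.ofReal (S k i - I k i)) x := by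
      intro x
      rw [hD]
      rw [ENNReal.ofReal_sum_of_nonneg
        (fun i _ => Set.indicator_nonneg (fun _ _ => hSI k i) x)]
      refine Finset.sum_congr rfl fun i _ => ?_
      by_cases hx : x ∈ Set.Ico (p k i.castSucc) (p k i.succ) <;> simp [hx]
    calc ∫⁻ x, ENNReal.ofReal (D k x)
        = ∫⁻ x, ∑ i : Fin (n k), Set.indicator (Set.Ico (p k i.castSucc) (p k i.succ))
            (fun _ => ENNReal.ofReal (S k i - I k i)) x := lintegral_congr heq
      _ = ∑ i : Fin (n k), ∫⁻ x, Set.indicator (Set.Ico (p k i.castSucc) (p k i.succ))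
            (fun _ => ENNReal.ofReal (S k i - I k i)) x :=
          lintegral_finset_sum _ (fun i _ => measurable_const.indicator measurableSet_Ico)
      _ = ∑ i : Fin (n k), ENNReal.ofReal (S k i - I k i) *
            volume (Set.Ico (p k i.castSucc) (p k i.succ)) :=
          Finset.sum_congr rfl fun i _ => lintegral_indicator_const measurableSet_Ico _
      _ = ∑ i : Fin (n k), ENNReal.ofReal ((S k i - I k i) * (p k i.succ - p k i.castSucc)) := by
          refine Finset.sum_congr rfl fun i _ => ?_
          rw [Real.volume_Ico, ← ENNReal.ofReal_mul (hSI k i)]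
      _ = ENNReal.ofReal (∑ i : Fin (n k), (S k i - I k i) * (p k i.succ - p k i.castSucc)) :=
          (ENNReal.ofReal_sum_of_nonneg (fun i _ => mul_nonneg (hSI k i)
            (sub_nonneg.2 (hmono k (Fin.castSucc_le_succ i))))).symm
      _ ≤ ENNReal.ofReal ((1/2 : ℝ)^k) := ENNReal.ofReal_le_ofReal (hsum k).le
  -- summability of the lintegrals
  have hgeo : (∑' k : ℕ, ENNReal.ofReal ((1/2 : ℝ)^k)) ≠ ⊤ := by
    have he : ∀ k : ℕ, ENNReal.ofReal ((1/2 : ℝ)^k) = (ENNReal.ofReal (1/2))^k :=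
      fun k => ENNReal.ofReal_pow (by norm_num) k
    rw [tsum_congr he, ENNReal.tsum_geometric, Ne, ENNReal.inv_eq_top,
      tsub_eq_zero_iff_le, not_le]
    exact ENNReal.ofReal_lt_one.2 (by norm_num)
  have htsum : (∑' k, ∫⁻ x, ENNReal.ofReal (D k x)) ≠ ⊤ :=
    ne_top_of_le_ne_top hgeo (ENNReal.tsum_le_tsum hlint)
  have hmeasOf : ∀ k, Measurable fun x => ENNReal.ofReal (D k x) :=
    fun k => ENNReal.measurable_ofReal.comp (hDmeas k)
  have hae : ∀ᵐ x : ℝ, (∑' k, ENNReal.ofReal (D k x)) < ⊤ :=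
    ae_lt_top (Measurable.ennreal_tsum hmeasOf)
      (by rwa [lintegral_tsum (fun k => (hmeasOf k).aemeasurable)])
  have hae2 : ∀ᵐ x : ℝ, Tendsto (fun k => D k x) atTop (𝓝 0) := by
    filter_upwards [hae] with x hx
    have h1 : Tendsto (fun k => ENNReal.ofReal (D k x)) atTop (𝓝 0) :=
      ENNReal.tendsto_atTop_zero_of_tsum_ne_top hx.ne
    have h2 := (ENNReal.tendsto_toReal (by simp : (0:ℝ≥0∞) ≠ ⊤)).comp h1
    simpa [Function.comp_def, ENNReal.toReal_ofReal (hDnonneg _ _)] using h2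
  have htend : ∀ᵐ x ∂(volume.restrict (Set.Ioo a b)),
      Tendsto (fun k => g k x) atTop (𝓝 (f x)) := by
    filter_upwards [ae_restrict_mem measurableSet_Ioo, ae_restrict_of_ae hae2] with x hx hDx
    have hxIco : x ∈ Set.Ico a b := ⟨hx.1.le, hx.2⟩
    have hbound : ∀ k, |f x - g k x| ≤ D k x := by
      intro k
      obtain ⟨i, hi, hgv, hDv⟩ := hval k x hxIco
      have h2 := hIle k i x ⟨hi.1, hi.2.le⟩
      rw [hgv, hDv, abs_le]
      constructor <;> linarith [h2.1, h2.2]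
    have habs : Tendsto (fun k => |f x - g k x|) atTop (𝓝 0) :=
      squeeze_zero (fun k => abs_nonneg _) hbound hDx
    have hsub2 : Tendsto (fun k => f x - g k x) atTop (𝓝 0) :=
      (tendsto_zero_iff_abs_tendsto_zero _).2 habs
    have h3 : Tendsto (fun k : ℕ => f x - (f x - g k x)) atTop (𝓝 (f x - 0)) :=
      Tendsto.sub tendsto_const_nhds hsub2
    simpa using h3
  have haem : AEMeasurable f (volume.restrict (Set.Ioo a b)) :=
    aemeasurable_of_tendsto_metrizable_ae atTop (fun k => (hgmeas k).aemeasurable) htend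
  have hre : volume.restrict (Set.Ioc a b) = volume.restrict (Set.Ioo a b) :=
    (Measure.restrict_congr_set Ioo_ae_eq_Ioc).symm
  rw [hre]
  exact haem.aestronglyMeasurable

lemma RiemannIntegrableOn.integrableOn_Ioc {f : ℝ → ℝ} {a b : ℝ}
    (h : RiemannIntegrableOn f a b) : IntegrableOn f (Set.Ioc a b) := by
  obtain ⟨C, hC⟩ := h.1
  refine Integrable.mono' (g := fun _ => C) (integrableOn_const measure_Ioc_lt_top.ne)
    h.aestronglyMeasurable ?_
  refine (ae_restrict_iff' measurableSet_Ioc).2 (ae_of_all _ fun x hx => ?_)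
  rw [Real.norm_eq_abs]
  exact hC x ⟨hx.1.le, hx.2⟩


/-- Dominated Convergence Theorem for improper Riemann integrals. Let `(fₙ)`
be a sequence of functions on `[a, ∞)` converging pointwise to `f`, each `fₙ` and `f` Riemann
integrable on `[a, c]` for every `c > a`, and suppose there is a function `M : [a, ∞) → ℝ`,
Riemann integrable on `[a, c]` for every `c > a` with convergent improper integral `∫ₐ^∞ M`
(i.e. `lim_{c → ∞} ∫ₐᶜ M` exists), such that `|fₙ x| ≤ M x` for all `n` and all `x ∈ [a, ∞)`.
Then the improper integrals `∫ₐ^∞ fₙ` and `∫ₐ^∞ f` converge absolutely (the integrals of the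
absolute values `|fₙ|`, `|f|` converge, as do those of `fₙ`, `f` themselves) and
`limₙ ∫ₐ^∞ fₙ = ∫ₐ^∞ f` (Riemann integrals over `[a, c]` coinciding with Lebesgue integrals). -/
theorem dominated_convergence_theorem_improper_riemann
    (a : ℝ) (F : ℕ → ℝ → ℝ) (f M : ℝ → ℝ)
    (hF : ∀ n, ∀ c > a, RiemannIntegrableOn (F n) a c)
    (hf : ∀ c > a, RiemannIntegrableOn f a c)
    (hM : ∀ c > a, RiemannIntegrableOn M a c)
    (hMconv : ∃ L : ℝ, Tendsto (fun c => ∫ x in a..c, M x) atTop (nhds L))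
    (hlim : ∀ x ∈ Set.Ici a, Tendsto (fun n => F n x) atTop (nhds (f x)))
    (hdom : ∀ n, ∀ x ∈ Set.Ici a, |F n x| ≤ M x) :
    (∀ n, ∃ An : ℝ, Tendsto (fun c => ∫ x in a..c, |F n x|) atTop (nhds An)) ∧
    (∃ Af : ℝ, Tendsto (fun c => ∫ x in a..c, |f x|) atTop (nhds Af)) ∧
    ∃ (I : ℕ → ℝ) (If : ℝ),
      (∀ n, Tendsto (fun c => ∫ x in a..c, F n x) atTop (nhds (I n))) ∧
      Tendsto (fun c => ∫ x in a..c, f x) atTop (nhds If) ∧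
      Tendsto I atTop (nhds If) := by
  have hMIoc : ∀ c : ℝ, IntegrableOn M (Set.Ioc a c) := by
    intro c
    rcases le_or_gt c a with hca | hac
    · rw [Set.Ioc_eq_empty (fun h' => absurd hca (not_le.2 h'))]
      exact integrableOn_empty
    · exact (hM c hac).integrableOn_Ioc
  have hM0 : ∀ x ∈ Set.Ici a, 0 ≤ M x := fun x hx => (abs_nonneg _).trans (hdom 0 x hx)
  obtain ⟨L, hL⟩ := hMconv
  have hnorm_eq : (fun c => ∫ x in a..c, M x) =ᶠ[atTop] fun c => ∫ x in a..c, ‖M x‖ := by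
    filter_upwards [eventually_ge_atTop a] with c hc
    rw [intervalIntegral.integral_of_le hc, intervalIntegral.integral_of_le hc]
    refine (setIntegral_congr_fun measurableSet_Ioc fun x hx => ?_).symm
    rw [Real.norm_eq_abs, abs_of_nonneg (hM0 x hx.1.le)]
  have hMnorm : Tendsto (fun c => ∫ x in a..c, ‖M x‖) atTop (𝓝 L) := hL.congr' hnorm_eq
  have hMIoi : IntegrableOn M (Set.Ioi a) :=
    integrableOn_Ioi_of_intervalIntegral_norm_tendsto L a (fun c => hMIoc c) tendsto_id hMnorm
  have hIoiU : Set.Ioi a = ⋃ k : ℕ, Set.Ioc a (a + (k + 1)) := by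
    ext x
    simp only [Set.mem_Ioi, Set.mem_iUnion, Set.mem_Ioc]
    constructor
    · intro hx
      obtain ⟨k, hk⟩ := exists_nat_gt (x - a)
      exact ⟨k, hx, by linarith⟩
    · rintro ⟨k, hk, -⟩; exact hk
  have hmeasIoi : ∀ u : ℝ → ℝ, (∀ c > a, RiemannIntegrableOn u a c) →
      AEStronglyMeasurable u (volume.restrict (Set.Ioi a)) := by
    intro u hu
    rw [hIoiU, aestronglyMeasurable_iUnion_iff]
    intro k
    exact (hu (a + (k + 1)) (lt_add_of_pos_right a (by positivity))).aestronglyMeasurable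
  have hFIoi : ∀ n, IntegrableOn (F n) (Set.Ioi a) := fun n =>
    Integrable.mono' hMIoi (hmeasIoi (F n) (hF n))
      ((ae_restrict_iff' measurableSet_Ioi).2 (ae_of_all _ fun x hx => by
        rw [Real.norm_eq_abs]; exact hdom n x (Set.mem_Ici.2 (le_of_lt hx))))
  have hfbound : ∀ x ∈ Set.Ici a, |f x| ≤ M x := fun x hx =>
    le_of_tendsto ((continuous_abs.tendsto _).comp (hlim x hx))
      (Filter.Eventually.of_forall fun n => hdom n x hx)
  have hfIoi : IntegrableOn f (Set.Ioi a) :=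
    Integrable.mono' hMIoi (hmeasIoi f hf)
      ((ae_restrict_iff' measurableSet_Ioi).2 (ae_of_all _ fun x hx => by
        rw [Real.norm_eq_abs]; exact hfbound x (Set.mem_Ici.2 (le_of_lt hx))))
  refine ⟨?_, ?_, ?_⟩
  · intro n
    exact ⟨∫ x in Set.Ioi a, |F n x|,
      intervalIntegral_tendsto_integral_Ioi a (hFIoi n).abs tendsto_id⟩
  · exact ⟨∫ x in Set.Ioi a, |f x|,
      intervalIntegral_tendsto_integral_Ioi a hfIoi.abs tendsto_id⟩
  · refine ⟨fun n => ∫ x in Set.Ioi a, F n x, ∫ x in Set.Ioi a, f x,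
      fun n => intervalIntegral_tendsto_integral_Ioi a (hFIoi n) tendsto_id,
      intervalIntegral_tendsto_integral_Ioi a hfIoi tendsto_id, ?_⟩
    exact tendsto_integral_of_dominated_convergence M (fun n => hmeasIoi (F n) (hF n)) hMIoi
      (fun n => (ae_restrict_iff' measurableSet_Ioi).2 (ae_of_all _ fun x hx => by
        rw [Real.norm_eq_abs]; exact hdom n x (Set.mem_Ici.2 (le_of_lt hx))))
      ((ae_restrict_iff' measurableSet_Ioi).2 (ae_of_all _ fun x hx => hlim x (Set.mem_Ici.2 (le_of_lt hx))))
end
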